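/- Let N be a positive integer, M ∈ Matrix (Fin N) (Fin N) ℝ symmetric positive definite, ρ ∈ ℝ^N, and let p : ℝ^N → ℝ be the Gaussian density with mean M ρ and covariance M with respect to Lebesgue measure on ℝ^N. Let f : ℝ^N → ℝ^N be continuously differentiable with compact support, let W ∈ Matrix (Fin N) (Fin N) ℝ be arbitrary, and set D = Wᵀ W. Then ∫ ‖W (f(u) − ρ)‖² p(u) du = ∫ [ ‖W (f(u) − M⁻¹ u)‖² + 2 · div(u ↦ D f(u))(u) ] p(u) du + κ, where κ = ‖W ρ‖² − ∫ ‖W M⁻¹ u‖² p(u) du. -/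

import Mathlib

open MeasureTheory Matrix

/-- The divergence of a map `h : ℝ^N → ℝ^N` at `u`: the trace of the Fréchet derivative. -/
noncomputable def divergence {N : ℕ} (h : (Fin N → ℝ) → (Fin N → ℝ)) (u : Fin N → ℝ) : ℝ :=
  LinearMap.trace ℝ (Fin N → ℝ) (fderiv ℝ h u).toLinearMap

/-- The Gaussian density on `ℝ^N` with mean `M ρ` and covariance `M`, with respect to
Lebesgue measure:
`p(u) = ((2π)^N det M)^{-1/2} exp(−(1/2)⟨u − Mρ, M⁻¹(u − Mρ)⟩)`. -/
noncomputable def gaussDensity {N : ℕ} (M : Matrix (Fin N) (Fin N) ℝ) (ρ : Fin N → ℝ)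
    (u : Fin N → ℝ) : ℝ :=
  ((2 * Real.pi) ^ N * M.det) ^ (-(1 : ℝ) / 2) *
    Real.exp (-(1 / 2) * ((u - M.mulVec ρ) ⬝ᵥ (M⁻¹.mulVec (u - M.mulVec ρ))))

/-!
The heart of the identity is Stein's lemma: integrating by parts against the Gaussian density `p`,
whose gradient is `∇p(u) = -(M⁻¹u - ρ) p(u)`, gives `∫ div g · p = ∫ ⟨M⁻¹u - ρ, g(u)⟩ p` for every
compactly supported `C¹` field `g`. Applied to `g = Wᵀ W f`, it turns the cross term
`-2 ⟨W f, W M⁻¹u⟩` of `‖W (f - M⁻¹u)‖²` into the cross term `-2 ⟨W f, W ρ⟩` of `‖W (f - ρ)‖²`,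
and the remaining terms are collected in `κ`. The integrals involved exist because `p` has
Gaussian decay, which is seen after the substitution `u = M ρ + S x` with `S Sᵀ = M`.
-/

section

variable {N : ℕ}

theorem divergence_eq_sum (h : (Fin N → ℝ) → Fin N → ℝ) (u : Fin N → ℝ) :
    divergence h u = ∑ i, fderiv ℝ h u (Pi.single i 1) i := by
  rw [divergence, LinearMap.trace_eq_matrix_trace ℝ (Pi.basisFun ℝ (Fin N)), Matrix.trace]
  simp

theorem continuous_divergence {g : (Fin N → ℝ) → Fin N → ℝ} (hg : ContDiff ℝ 1 g) :
    Continuous (divergence g) := by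
  simp only [funext (divergence_eq_sum g)]
  have := hg.continuous_fderiv one_ne_zero
  fun_prop

theorem hasCompactSupport_divergence {g : (Fin N → ℝ) → Fin N → ℝ} (hg : HasCompactSupport g) :
    HasCompactSupport (divergence g) :=
  (hg.fderiv ℝ).comp_left
    (g := fun L : (Fin N → ℝ) →L[ℝ] Fin N → ℝ => LinearMap.trace ℝ _ L.toLinearMap) (by simp)

section

variable {E : Type*} [TopologicalSpace E] [MeasurableSpace E] [OpensMeasurableSpace E]
  {μ : Measure E} [IsFiniteMeasureOnCompacts μ]

theorem Continuous.integrable_mul_of_hasCompactSupport {f h : E → ℝ} (hf : Continuous f)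
    (hh : Continuous h) (hhs : HasCompactSupport h) : Integrable (fun x => f x * h x) μ :=
  (hf.mul hh).integrable_of_hasCompactSupport (hhs.mul_left (f := f))

end

section

variable {E : Type*} [NormedAddCommGroup E] [NormedSpace ℝ E] [FiniteDimensional ℝ E]
  [MeasurableSpace E] [BorelSpace E] (μ : Measure E) [μ.IsAddHaarMeasure]

theorem integral_mul_fderiv_eq_neg_fderiv_mul_of_hasCompactSupport {p h : E → ℝ}
    (hp : ContDiff ℝ 1 p) (hh : ContDiff ℝ 1 h) (hhs : HasCompactSupport h) (v : E) :
    ∫ u, p u * fderiv ℝ h u v ∂μ = -∫ u, fderiv ℝ p u v * h u ∂μ := by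
  have hp' : Continuous fun u => fderiv ℝ p u v :=
    (hp.continuous_fderiv one_ne_zero).clm_apply continuous_const
  have hh' : Continuous fun u => fderiv ℝ h u v :=
    (hh.continuous_fderiv one_ne_zero).clm_apply continuous_const
  have hhs' : HasCompactSupport fun u => fderiv ℝ h u v :=
    (hhs.fderiv ℝ).comp_left (g := fun L : E →L[ℝ] ℝ => L v) rfl
  exact integral_mul_fderiv_eq_neg_fderiv_mul_of_integrable
    (hp'.integrable_mul_of_hasCompactSupport hh.continuous hhs)
    (hp.continuous.integrable_mul_of_hasCompactSupport hh' hhs')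
    (hp.continuous.integrable_mul_of_hasCompactSupport hh.continuous hhs)
    (fun u _ => (hp.differentiable one_ne_zero).differentiableAt)
    (fun u _ => (hh.differentiable one_ne_zero).differentiableAt)

end

theorem integral_divergence_mul_eq_neg_integral_fderiv (μ : Measure (Fin N → ℝ))
    [μ.IsAddHaarMeasure] {g : (Fin N → ℝ) → Fin N → ℝ} {p : (Fin N → ℝ) → ℝ}
    (hg : ContDiff ℝ 1 g) (hgs : HasCompactSupport g) (hp : ContDiff ℝ 1 p) :
    ∫ u, divergence g u * p u ∂μ = -∫ u, fderiv ℝ p u (g u) ∂μ := by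
  have hgi : ∀ i, ContDiff ℝ 1 fun u => g u i := contDiff_pi.mp hg
  have hgis : ∀ i, HasCompactSupport fun u => g u i := fun i =>
    hgs.comp_left (g := fun v : Fin N → ℝ => v i) rfl
  have hdiv : ∀ u, divergence g u * p u
      = ∑ i, p u * fderiv ℝ (fun w => g w i) u (Pi.single i 1) := by
    intro u
    rw [divergence_eq_sum, Finset.sum_mul]
    refine Finset.sum_congr rfl fun i _ => ?_
    rw [fderiv_apply ((hg.differentiable one_ne_zero) u)]
    exact mul_comm _ _
  have hgrad : ∀ u, fderiv ℝ p u (g u) = ∑ i, fderiv ℝ p u (Pi.single i 1) * g u i := by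
    intro u
    conv_lhs => rw [pi_eq_sum_univ' (g u)]
    simp [mul_comm]
  have hint_left (i : Fin N) :
      Integrable (fun u => p u * fderiv ℝ (fun w => g w i) u (Pi.single i 1)) μ :=
    hp.continuous.integrable_mul_of_hasCompactSupport
      (((hgi i).continuous_fderiv one_ne_zero).clm_apply continuous_const)
      (((hgis i).fderiv ℝ).comp_left (g := fun L : (Fin N → ℝ) →L[ℝ] ℝ => L _) rfl)
  have hint_right (i : Fin N) : Integrable (fun u => fderiv ℝ p u (Pi.single i 1) * g u i) μ :=
    ((hp.continuous_fderiv one_ne_zero).clm_apply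
      continuous_const).integrable_mul_of_hasCompactSupport (hgi i).continuous (hgis i)
  simp only [hdiv, hgrad]
  rw [integral_finsetSum _ fun i _ => hint_left i, integral_finsetSum _ fun i _ => hint_right i,
    ← Finset.sum_neg_distrib]
  exact Finset.sum_congr rfl fun i _ =>
    integral_mul_fderiv_eq_neg_fderiv_mul_of_hasCompactSupport μ hp (hgi i) (hgis i) _

section

variable {ι : Type*} [Fintype ι]

theorem exp_neg_mul_dotProduct_self (b : ℝ) (x : ι → ℝ) :
    Real.exp (-b * (x ⬝ᵥ x)) = ∏ i, Real.exp (-b * x i ^ 2) := by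
  simp only [dotProduct, Finset.mul_sum, Real.exp_sum, sq]

theorem integrable_exp_neg_mul_dotProduct_self {b : ℝ} (hb : 0 < b) :
    Integrable fun x : ι → ℝ => Real.exp (-b * (x ⬝ᵥ x)) := by
  simp only [exp_neg_mul_dotProduct_self]
  exact Integrable.fintype_prod (f := fun _ t => Real.exp (-b * t ^ 2))
    fun _ => integrable_exp_neg_mul_sq hb

theorem integral_exp_neg_mul_dotProduct_self (b : ℝ) :
    ∫ x : ι → ℝ, Real.exp (-b * (x ⬝ᵥ x)) = √(Real.pi / b) ^ Fintype.card ι := by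
  simp only [exp_neg_mul_dotProduct_self]
  rw [integral_fintype_prod_volume_eq_pow (fun t => Real.exp (-b * t ^ 2)), integral_gaussian]

end

theorem dotProduct_self_nonneg {n : Type*} [Fintype n] (v : n → ℝ) : 0 ≤ v ⬝ᵥ v :=
  Finset.sum_nonneg fun i _ => mul_self_nonneg (v i)

theorem dotProduct_self_add_mulVec_le {m n : Type*} [Fintype m] [Fintype n]
    (d : m → ℝ) (B : Matrix m n ℝ) (x : n → ℝ) :
    (d + B *ᵥ x) ⬝ᵥ (d + B *ᵥ x) ≤ 2 * (d ⬝ᵥ d + ∑ i, B i ⬝ᵥ B i) * (1 + x ⬝ᵥ x) := by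
  have hrow (i : m) : (d i + B i ⬝ᵥ x) * (d i + B i ⬝ᵥ x)
      ≤ 2 * (d i * d i + B i ⬝ᵥ B i) * (1 + x ⬝ᵥ x) := by
    have hcs : (B i ⬝ᵥ x) ^ 2 ≤ (B i ⬝ᵥ B i) * (x ⬝ᵥ x) := by
      simpa [dotProduct, sq] using Finset.sum_mul_sq_le_sq_mul_sq Finset.univ (B i) x
    have hB := dotProduct_self_nonneg (B i)
    have hx := dotProduct_self_nonneg x
    nlinarith [sq_nonneg (d i - B i ⬝ᵥ x), mul_self_nonneg (d i), mul_nonneg hB hx]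
  calc (d + B *ᵥ x) ⬝ᵥ (d + B *ᵥ x) = ∑ i, (d i + B i ⬝ᵥ x) * (d i + B i ⬝ᵥ x) := rfl
    _ ≤ ∑ i, 2 * (d i * d i + B i ⬝ᵥ B i) * (1 + x ⬝ᵥ x) := Finset.sum_le_sum fun i _ => hrow i
    _ = 2 * (d ⬝ᵥ d + ∑ i, B i ⬝ᵥ B i) * (1 + x ⬝ᵥ x) := by
      rw [← Finset.sum_mul, ← Finset.mul_sum, Finset.sum_add_distrib]; rfl

theorem one_add_mul_exp_neg_half_le (s : ℝ) :
    (1 + s) * Real.exp (-(1 / 2) * s) ≤ 4 * Real.exp (-(1 / 4) * s) := by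
  have h' : Real.exp (-(1 / 4) * s) = Real.exp (s / 4) * Real.exp (-(1 / 2) * s) := by
    rw [← Real.exp_add]; ring_nf
  rw [h']
  nlinarith [Real.add_one_le_exp (s / 4), Real.exp_pos (-(1 / 2) * s)]

section

variable {ι F : Type*} [Fintype ι] [DecidableEq ι] [NormedAddCommGroup F] [NormedSpace ℝ F]
  {S : Matrix ι ι ℝ}

theorem bijective_add_mulVec (hS : IsUnit S) (c : ι → ℝ) :
    Function.Bijective fun x => c + S *ᵥ x :=
  ⟨(add_right_injective c).comp (mulVec_injective_iff_isUnit.mpr hS),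
    (add_left_surjective c).comp (mulVec_surjective_iff_isUnit.mpr hS)⟩

theorem hasFDerivWithinAt_add_mulVec (c x : ι → ℝ) (s : Set (ι → ℝ)) :
    HasFDerivWithinAt (fun x => c + S *ᵥ x) (LinearMap.toContinuousLinearMap (toLin' S)) s x :=
  ((LinearMap.toContinuousLinearMap (toLin' S)).hasFDerivAt.const_add c).hasFDerivWithinAt

theorem integral_comp_add_mulVec (hS : IsUnit S) (c : ι → ℝ) (h : (ι → ℝ) → F) :
    ∫ u, h u = |S.det| • ∫ x, h (c + S *ᵥ x) := by
  have := integral_image_eq_integral_abs_det_fderiv_smul volume MeasurableSet.univ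
    (fun x _ => hasFDerivWithinAt_add_mulVec c x _) (bijective_add_mulVec hS c).1.injOn h
  rw [Set.image_univ_of_surjective (bijective_add_mulVec hS c).2, setIntegral_univ,
    setIntegral_univ] at this
  simpa [integral_smul] using this

theorem integrable_comp_add_mulVec_iff (hS : IsUnit S) (c : ι → ℝ) (h : (ι → ℝ) → F) :
    Integrable (fun x => h (c + S *ᵥ x)) ↔ Integrable h := by
  have := integrableOn_image_iff_integrableOn_abs_det_fderiv_smul volume MeasurableSet.univ
    (fun x _ => hasFDerivWithinAt_add_mulVec c x _) (bijective_add_mulVec hS c).1.injOn h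
  rw [Set.image_univ_of_surjective (bijective_add_mulVec hS c).2, integrableOn_univ,
    integrableOn_univ] at this
  simpa [integrable_fun_smul_iff, ((isUnit_iff_isUnit_det S).mp hS).ne_zero] using this.symm

end

open scoped MatrixOrder in
theorem Matrix.PosSemidef.exists_mul_transpose_eq {n : Type*} [Fintype n] [DecidableEq n]
    {M : Matrix n n ℝ} (hM : M.PosSemidef) : ∃ S : Matrix n n ℝ, S * Sᵀ = M := by
  obtain ⟨B, hB⟩ := CStarAlgebra.nonneg_iff_eq_star_mul_self.mp hM.nonneg
  exact ⟨Bᵀ, by rw [hB, transpose_transpose, star_eq_conjTranspose,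
    conjTranspose_eq_transpose_of_trivial]⟩

theorem Matrix.transpose_mul_inv_mul_self_mul_transpose {n R : Type*} [Fintype n] [DecidableEq n]
    [CommRing R] {S : Matrix n n R} (hS : IsUnit S.det) : Sᵀ * (S * Sᵀ)⁻¹ * S = 1 := by
  rw [Matrix.mul_inv_rev, ← mul_assoc, mul_nonsing_inv _ (by rwa [det_transpose]), one_mul,
    nonsing_inv_mul _ hS]

theorem hasFDerivAt_sub_dotProduct_mulVec_sub {ι : Type*} [Fintype ι] [DecidableEq ι]
    (A : Matrix ι ι ℝ) (c u : ι → ℝ) :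
    ∃ q' : (ι → ℝ) →L[ℝ] ℝ, HasFDerivAt (fun u => (u - c) ⬝ᵥ A *ᵥ (u - c)) q' u ∧
      ∀ v, q' v = (u - c) ⬝ᵥ A *ᵥ v + v ⬝ᵥ A *ᵥ (u - c) := by
  set B := (toLinearMap₂' ℝ A : (ι → ℝ) →ₗ[ℝ] (ι → ℝ) →ₗ[ℝ] ℝ).toContinuousBilinearMap
  have hsub : HasFDerivAt (fun u : ι → ℝ => u - c) (ContinuousLinearMap.id ℝ _) u :=
    (hasFDerivAt_id u).sub_const c
  refine ⟨_, (B.hasFDerivAt_of_bilinear hsub hsub).congr_of_eventuallyEq ?_, fun v => ?_⟩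
  · exact Filter.Eventually.of_forall fun w => by simp [B, toLinearMap₂'_apply']
  · simp [B, toLinearMap₂'_apply', mulVec_sub, dotProduct_sub]

theorem contDiff_gaussDensity {n : WithTop ℕ∞} (M : Matrix (Fin N) (Fin N) ℝ) (ρ : Fin N → ℝ) :
    ContDiff ℝ n (gaussDensity M ρ) := by
  unfold gaussDensity
  simp only [dotProduct, mulVec]
  fun_prop

section

variable {M : Matrix (Fin N) (Fin N) ℝ}

theorem fderiv_gaussDensity_apply (hM : M.PosDef) (ρ u v : Fin N → ℝ) :
    fderiv ℝ (gaussDensity M ρ) u v = -((M⁻¹ *ᵥ u - ρ) ⬝ᵥ v) * gaussDensity M ρ u := by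
  obtain ⟨q', hq, hq'⟩ := hasFDerivAt_sub_dotProduct_mulVec_sub M⁻¹ (M *ᵥ ρ) u
  have hsymm : (M⁻¹)ᵀ = M⁻¹ := by
    simpa [IsHermitian, conjTranspose_eq_transpose_of_trivial] using hM.isHermitian.inv
  have hcenter : M⁻¹ *ᵥ (u - M *ᵥ ρ) = M⁻¹ *ᵥ u - ρ := by
    rw [mulVec_sub, mulVec_mulVec, nonsing_inv_mul _ (isUnit_iff_ne_zero.mpr hM.det_pos.ne'),
      one_mulVec]
  have hq'v : q' v = 2 * ((M⁻¹ *ᵥ u - ρ) ⬝ᵥ v) := by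
    rw [hq', dotProduct_mulVec, ← mulVec_transpose, hsymm, dotProduct_comm v, hcenter]
    ring
  have hp : HasFDerivAt (gaussDensity M ρ) _ u := ((hq.const_mul (-(1 / 2) : ℝ)).exp).const_mul
    (((2 * Real.pi) ^ N * M.det) ^ (-(1 : ℝ) / 2))
  rw [hp.fderiv]
  simp only [_root_.smul_apply, hq'v, smul_eq_mul]
  unfold gaussDensity
  ring

theorem gaussDensity_add_mulVec {S : Matrix (Fin N) (Fin N) ℝ} (hS : IsUnit S.det)
    (hSM : S * Sᵀ = M) (ρ x : Fin N → ℝ) :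
    gaussDensity M ρ (M *ᵥ ρ + S *ᵥ x)
      = ((2 * Real.pi) ^ N * M.det) ^ (-(1 : ℝ) / 2) * Real.exp (-(1 / 2) * (x ⬝ᵥ x)) := by
  have hquad : (S *ᵥ x) ⬝ᵥ M⁻¹ *ᵥ (S *ᵥ x) = x ⬝ᵥ x := by
    rw [mulVec_mulVec, ← vecMul_transpose, ← dotProduct_mulVec, mulVec_mulVec, ← mul_assoc, ← hSM,
      transpose_mul_inv_mul_self_mul_transpose hS, one_mulVec]
  rw [gaussDensity, add_sub_cancel_left, hquad]

theorem Matrix.PosDef.exists_mul_transpose_eq {n : Type*} [Fintype n] [DecidableEq n]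
    {M : Matrix n n ℝ} (hM : M.PosDef) :
    ∃ S : Matrix n n ℝ, S * Sᵀ = M ∧ M.det = S.det ^ 2 ∧ IsUnit S.det := by
  obtain ⟨S, hSM⟩ := hM.posSemidef.exists_mul_transpose_eq
  have hdet : M.det = S.det ^ 2 := by rw [← hSM, det_mul, det_transpose, sq]
  refine ⟨S, hSM, hdet, isUnit_iff_ne_zero.mpr fun h => ?_⟩
  simpa [hdet, h] using hM.det_pos

theorem integral_gaussDensity (hM : M.PosDef) (ρ : Fin N → ℝ) :
    ∫ u, gaussDensity M ρ u = 1 := by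
  obtain ⟨S, hSM, hdet, hS⟩ := hM.exists_mul_transpose_eq
  have h2π : (0 : ℝ) < 2 * Real.pi := by positivity
  have hsqrt : √((2 * Real.pi) ^ N * S.det ^ 2) = √(2 * Real.pi) ^ N * |S.det| := by
    rw [Real.sqrt_mul (by positivity), Real.sqrt_sq_eq_abs, Real.sqrt_eq_rpow, Real.sqrt_eq_rpow,
      ← Real.rpow_natCast, ← Real.rpow_natCast, ← Real.rpow_mul h2π.le, ← Real.rpow_mul h2π.le,
      mul_comm (1 / 2 : ℝ)]
  rw [integral_comp_add_mulVec ((isUnit_iff_isUnit_det S).mpr hS) (M *ᵥ ρ),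
    funext (gaussDensity_add_mulVec hS hSM ρ), integral_const_mul,
    integral_exp_neg_mul_dotProduct_self, Fintype.card_fin, hdet, neg_div,
    Real.rpow_neg (by positivity), ← Real.sqrt_eq_rpow, hsqrt,
    show Real.pi / (1 / 2) = 2 * Real.pi by ring, smul_eq_mul]
  field_simp [hS.ne_zero]

theorem integrable_gaussDensity (hM : M.PosDef) (ρ : Fin N → ℝ) :
    Integrable (gaussDensity M ρ) :=
  Integrable.of_integral_ne_zero (by rw [integral_gaussDensity hM]; exact one_ne_zero)

theorem integrable_dotProduct_mulVec_self_mul_gaussDensity {m : Type*} [Fintype m]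
    (hM : M.PosDef) (ρ : Fin N → ℝ) (A : Matrix m (Fin N) ℝ) :
    Integrable fun u => (A *ᵥ u) ⬝ᵥ (A *ᵥ u) * gaussDensity M ρ u := by
  obtain ⟨S, hSM, -, hS⟩ := hM.exists_mul_transpose_eq
  rw [← integrable_comp_add_mulVec_iff ((isUnit_iff_isUnit_det S).mpr hS) (M *ᵥ ρ)]
  simp only [gaussDensity_add_mulVec hS hSM, mulVec_add, mulVec_mulVec]
  set k := ((2 * Real.pi) ^ N * M.det) ^ (-(1 : ℝ) / 2)
  set C := 2 * (((A * M) *ᵥ ρ) ⬝ᵥ ((A * M) *ᵥ ρ) + ∑ i, (A * S) i ⬝ᵥ (A * S) i)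
  have hk : 0 < k := Real.rpow_pos_of_pos (mul_pos (by positivity) hM.det_pos) _
  refine ((integrable_exp_neg_mul_dotProduct_self (b := 1 / 4) (by norm_num)).const_mul
    (C * k * 4)).mono' (by fun_prop) (Filter.Eventually.of_forall fun x => ?_)
  set q := ((A * M) *ᵥ ρ + (A * S) *ᵥ x) ⬝ᵥ ((A * M) *ᵥ ρ + (A * S) *ᵥ x)
  have hq0 : 0 ≤ q := dotProduct_self_nonneg _
  have hC : 0 ≤ C := mul_nonneg zero_le_two (add_nonneg (dotProduct_self_nonneg _)
    (Finset.sum_nonneg fun i _ => dotProduct_self_nonneg _))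
  rw [Real.norm_of_nonneg (by positivity)]
  calc q * (k * Real.exp (-(1 / 2) * (x ⬝ᵥ x)))
      ≤ C * (1 + x ⬝ᵥ x) * (k * Real.exp (-(1 / 2) * (x ⬝ᵥ x))) := by
        gcongr; exact dotProduct_self_add_mulVec_le _ _ x
    _ = C * k * ((1 + x ⬝ᵥ x) * Real.exp (-(1 / 2) * (x ⬝ᵥ x))) := by ring
    _ ≤ C * k * (4 * Real.exp (-(1 / 4) * (x ⬝ᵥ x))) :=
        mul_le_mul_of_nonneg_left (one_add_mul_exp_neg_half_le _) (by positivity)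
    _ = C * k * 4 * Real.exp (-(1 / 4) * (x ⬝ᵥ x)) := by ring

theorem integral_divergence_mul_gaussDensity (hM : M.PosDef) (ρ : Fin N → ℝ)
    {g : (Fin N → ℝ) → Fin N → ℝ} (hg : ContDiff ℝ 1 g) (hgs : HasCompactSupport g) :
    ∫ u, divergence g u * gaussDensity M ρ u
      = ∫ u, (M⁻¹ *ᵥ u - ρ) ⬝ᵥ g u * gaussDensity M ρ u := by
  rw [integral_divergence_mul_eq_neg_integral_fderiv volume hg hgs (contDiff_gaussDensity M ρ),
    ← integral_neg]
  congr with u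
  rw [fderiv_gaussDensity_apply hM]
  ring

end

theorem dotProduct_self_mulVec_sub_eq {m n : Type*} [Fintype m] [Fintype n]
    (W : Matrix m n ℝ) (x y z : n → ℝ) :
    (W *ᵥ (x - y)) ⬝ᵥ (W *ᵥ (x - y))
      = (W *ᵥ (x - z)) ⬝ᵥ (W *ᵥ (x - z)) - (W *ᵥ z) ⬝ᵥ (W *ᵥ z) + (W *ᵥ y) ⬝ᵥ (W *ᵥ y)
        - 2 * ((y - z) ⬝ᵥ (Wᵀ * W) *ᵥ x) := by
  rw [← mulVec_mulVec, dotProduct_mulVec (y - z), vecMul_transpose]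
  simp only [mulVec_sub, sub_dotProduct, dotProduct_sub, dotProduct_comm (W *ᵥ z),
    dotProduct_comm (W *ᵥ y)]
  ring

end

theorem ensure_unbiased_core_identity_general
    {N : ℕ}
    (M : Matrix (Fin N) (Fin N) ℝ) (hM : M.PosDef)
    (ρ : Fin N → ℝ)
    (f : (Fin N → ℝ) → (Fin N → ℝ))
    (hf : ContDiff ℝ 1 f) (hfsupp : HasCompactSupport f)
    (W : Matrix (Fin N) (Fin N) ℝ) :
    ∫ u, ((W.mulVec (f u - ρ)) ⬝ᵥ (W.mulVec (f u - ρ))) * gaussDensity M ρ u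
      = (∫ u,
            ((W.mulVec (f u - M⁻¹.mulVec u)) ⬝ᵥ (W.mulVec (f u - M⁻¹.mulVec u))
              + 2 * divergence (fun v => (Wᵀ * W).mulVec (f v)) u) * gaussDensity M ρ u)
        + ((W.mulVec ρ) ⬝ᵥ (W.mulVec ρ)
            - ∫ u, ((W.mulVec (M⁻¹.mulVec u)) ⬝ᵥ (W.mulVec (M⁻¹.mulVec u)))
                * gaussDensity M ρ u) := by
  set g : (Fin N → ℝ) → Fin N → ℝ := fun v => (Wᵀ * W) *ᵥ f v
  have hg : ContDiff ℝ 1 g := (mulVecLin (Wᵀ * W)).toContinuousLinearMap.contDiff.comp hf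
  have hgs : HasCompactSupport g := hfsupp.comp_left (mulVec_zero _)
  have hStein := integral_divergence_mul_gaussDensity hM ρ hg hgs
  have hQp := integrable_dotProduct_mulVec_self_mul_gaussDensity hM ρ (W * M⁻¹)
  simp only [← mulVec_mulVec] at hQp
  have hpi := integrable_gaussDensity hM ρ
  set p := gaussDensity M ρ
  set c := (W *ᵥ ρ) ⬝ᵥ (W *ᵥ ρ)
  set F := fun u => (W *ᵥ (f u - ρ)) ⬝ᵥ (W *ᵥ (f u - ρ)) - c
  have hp : Continuous p := (contDiff_gaussDensity (n := 0) M ρ).continuous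
  -- unlike `‖W (f u - ρ)‖²`, `F` vanishes off the support of `f`
  have hFp : Integrable fun u => F u * p u :=
    ((by fun_prop : Continuous F).mul hp).integrable_of_hasCompactSupport <| .mul_right <|
      hfsupp.comp_left (g := fun y => (W *ᵥ (y - ρ)) ⬝ᵥ (W *ᵥ (y - ρ)) - c)
        (by simp [c, mulVec_neg])
  have hTp : Integrable fun u => (M⁻¹ *ᵥ u - ρ) ⬝ᵥ g u * p u :=
    ((by fun_prop : Continuous _).mul hp).integrable_of_hasCompactSupport <| .mul_right <|
      hgs.mono fun u hu h0 => hu (by simp [h0])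
  have hDp : Integrable fun u => divergence g u * p u :=
    ((continuous_divergence hg).mul hp).integrable_of_hasCompactSupport
      (hasCompactSupport_divergence hgs).mul_right
  have hL (u : Fin N → ℝ) : (W *ᵥ (f u - ρ)) ⬝ᵥ (W *ᵥ (f u - ρ)) * p u = F u * p u + c * p u := by
    ring
  have hR (u : Fin N → ℝ) :
      ((W *ᵥ (f u - M⁻¹ *ᵥ u)) ⬝ᵥ (W *ᵥ (f u - M⁻¹ *ᵥ u)) + 2 * divergence g u) * p u
        = F u * p u + (W *ᵥ (M⁻¹ *ᵥ u)) ⬝ᵥ (W *ᵥ (M⁻¹ *ᵥ u)) * p u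
          + 2 * (divergence g u * p u - (M⁻¹ *ᵥ u - ρ) ⬝ᵥ g u * p u) := by
    rw [dotProduct_self_mulVec_sub_eq W _ _ ρ]
    ring
  rw [integral_congr_ae (.of_forall hL), integral_congr_ae (.of_forall hR),
    integral_add hFp (hpi.const_mul c),
    integral_add (hFp.fun_add hQp) ((hDp.sub' hTp).const_mul 2), integral_add hFp hQp,
    integral_const_mul, integral_const_mul, integral_sub hDp hTp, hStein, integral_gaussDensity hM]
  ring

/-- **Lemma 2 (ENSURE unbiasedness, core identity, nondegenerate case).**
Let `M` be symmetric positive definite, `ρ ∈ ℝ^N`, `p` the Gaussian density with mean `M ρ`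
and covariance `M`, `f : ℝ^N → ℝ^N` continuously differentiable with compact support, `W`
an arbitrary matrix and `D = Wᵀ W`.  Then
`∫ ‖W (f(u) − ρ)‖² p(u) du`
`  = ∫ [‖W (f(u) − M⁻¹ u)‖² + 2 div(D f)(u)] p(u) du + κ`,
where `κ = ‖W ρ‖² − ∫ ‖W M⁻¹ u‖² p(u) du`. -/
theorem ensure_unbiased_core_identity
    {N : ℕ} (hN : 0 < N)
    (M : Matrix (Fin N) (Fin N) ℝ) (hM : M.PosDef)
    (ρ : Fin N → ℝ)
    (f : (Fin N → ℝ) → (Fin N → ℝ))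
    (hf : ContDiff ℝ 1 f) (hfsupp : HasCompactSupport f)
    (W : Matrix (Fin N) (Fin N) ℝ) :
    ∫ u, ((W.mulVec (f u - ρ)) ⬝ᵥ (W.mulVec (f u - ρ))) * gaussDensity M ρ u
      = (∫ u,
            ((W.mulVec (f u - M⁻¹.mulVec u)) ⬝ᵥ (W.mulVec (f u - M⁻¹.mulVec u))
              + 2 * divergence (fun v => (Wᵀ * W).mulVec (f v)) u) * gaussDensity M ρ u)
        + ((W.mulVec ρ) ⬝ᵥ (W.mulVec ρ)
            - ∫ u, ((W.mulVec (M⁻¹.mulVec u)) ⬝ᵥ (W.mulVec (M⁻¹.mulVec u)))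
                * gaussDensity M ρ u) :=
  ensure_unbiased_core_identity_general M hM ρ f hf hfsupp W
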